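/- For all integers m ≥ 2 and x ≥ 1 and every codeword c ∈ C(m,x) whose leftmost bit c_{m−1} equals 1, the balanced index g^b(c) := N(m,x) − 1 − g(c) satisfies 2·g^b(c) = Σ_{i=0}^{m−2} N(i−x+1, x)·[c_i = 0], where the sum ranges over the positions i < m−1 with c_i = 0 and any term N(k,x) with k ≤ 1 is interpreted, by convention, as 2. -/

import Mathlib

/-!
A codeword `d > c` is determined by the highest position `i` where it differs from `c`; there
`c_i = 0`, `d_i = 1`, and `d` is any LOCO completion below `i` of `c_{m-1} ⋯ c_{i+1} 1`. Write
`F(n) = N(n + 1, x) / 2` for the number of codewords of length `n + 1` with leading bit `1`.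
If `c_{i+1} = 1`, the completions are counted by `F(i)`. If at least `x + 1` zeros of `c` lie
above `i`, the new run of ones forces `d_{i-x}, …, d_i = 1` and there are `F(i - x)`
completions. Otherwise a run of at most `x` zeros would be enclosed by ones, so there are none.
Finally `F(t) = ∑_{t-x ≤ j ≤ t} F(j - x)`, so the term `F(t)` at the top `t` of a run of zeros
pays for the `x` zeros below `t` that contribute nothing, and
`N(m, x) - 1 - g(c) = #{d > c} = ∑_{c_i = 0} F(i - x)`.
-/


/-- `noForbidden m x c` says the binary word `c = (c_{m-1}, …, c_0)` contains no contiguous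
subword of the form `0 1^y 0` or `1 0^y 1` for any `1 ≤ y ≤ x`. -/
def noForbidden (m x : ℕ) (c : Fin m → Bool) : Prop :=
  ∀ j y : ℕ, 1 ≤ y → y ≤ x → (h : j + y + 1 < m) →
    ¬ ((∀ k, 1 ≤ k → (hk : k ≤ y) → c ⟨j + k, by omega⟩ = ! c ⟨j, by omega⟩) ∧
        c ⟨j + y + 1, h⟩ = c ⟨j, by omega⟩)

/-- `N(m, x)`: the cardinality of the LOCO code `C(m, x)`. -/
noncomputable def locoN (m x : ℕ) : ℕ := Nat.card {c : Fin m → Bool // noForbidden m x c}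

/-- `N(k, x)` extended to integer `k` by the convention `N(k, x) = 2` for `k ≤ 1`. -/
noncomputable def Nex (k : ℤ) (x : ℕ) : ℤ := if k ≤ 1 then 2 else (locoN k.toNat x : ℤ)

/-- Strict lexicographic order on binary words, comparing bits from `c_{m-1}`
(most significant) down to `c_0`, with `0 < 1`. -/
def lexLt (m : ℕ) (d c : Fin m → Bool) : Prop :=
  ∃ i : Fin m, d i = false ∧ c i = true ∧ ∀ j : Fin m, (i : ℕ) < (j : ℕ) → d j = c j

/-- The index `g(m, x, c)` of a codeword: the number of codewords of `C(m, x)` that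
precede `c` in lexicographic order. -/
noncomputable def locoIdx (m x : ℕ) (c : Fin m → Bool) : ℕ :=
  Nat.card {d : Fin m → Bool // noForbidden m x d ∧ lexLt m d c}

open Finset Classical

namespace Loco

def bitAt {m : ℕ} (d : Fin m → Bool) (n : ℕ) : Bool :=
  if h : n < m then d ⟨n, h⟩ else false

lemma bitAt_of_lt {m n : ℕ} (d : Fin m → Bool) (h : n < m) : bitAt d n = d ⟨n, h⟩ :=
  dif_pos h

lemma bitAt_not {m n : ℕ} (d : Fin m → Bool) (h : n < m) :
    bitAt (fun i => !d i) n = !bitAt d n := by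
  simp [bitAt, h]

/-- The window `s, …, m - 1` of `w` is a LOCO word. -/
def IsLocoOn (x s m : ℕ) (w : ℕ → Bool) : Prop :=
  ∀ p, s ≤ p → ∀ k, 1 ≤ k → k ≤ x → p + 1 + k < m → w p ≠ w (p + 1) →
    w (p + 1 + k) = w (p + 1)

namespace IsLocoOn

variable {x s m : ℕ} {w : ℕ → Bool}

lemma mono {s' m' : ℕ} (h : IsLocoOn x s m w) (hs : s ≤ s') (hm : m' ≤ m) :
    IsLocoOn x s' m' w :=
  fun p hp k hk1 hkx hkm => h p (hs.trans hp) k hk1 hkx (by omega)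

lemma congr {w' : ℕ → Bool} (h : IsLocoOn x s m w)
    (hw : ∀ n, s ≤ n → n < m → w n = w' n) : IsLocoOn x s m w' := by
  intro p hp k hk1 hkx hkm hflip
  rw [← hw _ (by omega) hkm, ← hw _ (by omega) (by omega)]
  exact h p hp k hk1 hkx hkm (by rwa [hw _ hp (by omega), hw _ (by omega) (by omega)])

lemma not (h : IsLocoOn x s m w) : IsLocoOn x s m fun n => !w n := by
  intro p hp k hk1 hkx hkm hflip
  simp only at hflip ⊢
  rw [h p hp k hk1 hkx hkm fun he => hflip (by rw [he])]

lemma apply_eq_of_ne (h : IsLocoOn x s m w) {p q : ℕ} (hp : s ≤ p) (hflip : w p ≠ w (p + 1))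
    (hpq : p < q) (hqx : q ≤ p + 1 + x) (hqm : q < m) : w q = w (p + 1) := by
  obtain rfl | hq := (Nat.succ_le_of_lt hpq).eq_or_lt
  · rfl
  · simpa [show p + 1 + (q - p - 1) = q by omega] using
      h p hp (q - p - 1) (by omega) (by omega) (by omega) hflip

lemma apply_eq_of_ne_succ (h : IsLocoOn x s m w) {t j : ℕ} (hflip : w t ≠ w (t + 1))
    (htm : t + 1 < m) (hj : s ≤ j) (htj : t ≤ j + x) (hjt : j ≤ t) : w j = w t := by
  induction hd : t - j generalizing j with
  | zero => rw [show j = t by omega]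
  | succ d ih =>
    have hnext : w (j + 1) = w t := ih (by omega) (by omega) (by omega) (by omega)
    by_contra hne
    have := h j hj (t - j) (by omega) (by omega) (by omega) (by rwa [hnext])
    rw [show j + 1 + (t - j) = t + 1 by omega, hnext] at this
    exact hflip this.symm

/-- A run of `a` ending at `s` may be short; `hjoin` makes `b` extend it by `x` equal bits. -/
lemma glue {a b : ℕ → Bool} (ha : IsLocoOn x 0 (s + 1) a) (hb : IsLocoOn x s m b)
    (hab : a s = b s) (hjoin : 0 < s → ∀ k ≤ x, s + k < m → b (s + k) = b s) :
    IsLocoOn x 0 m fun n => if n ≤ s then a n else b n := by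
  have hg : ∀ n, s ≤ n → (if n ≤ s then a n else b n) = b n := fun n hn => by
    split_ifs with h
    · rwa [show n = s by omega]
    · rfl
  intro p _ k hk1 hkx hkm hflip
  by_cases hsp : s ≤ p
  · simp only [hg _ hsp, hg (p + 1) (by omega), hg (p + 1 + k) (by omega)] at hflip ⊢
    exact hb p hsp k hk1 hkx hkm hflip
  by_cases hks : p + 1 + k ≤ s
  · simp only [if_pos hks, if_pos (show p + 1 ≤ s by omega), if_pos (show p ≤ s by omega)]
      at hflip ⊢
    exact ha p (Nat.zero_le _) k hk1 hkx (by omega) hflip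
  simp only [if_neg hks, if_pos (show p + 1 ≤ s by omega), if_pos (show p ≤ s by omega)]
    at hflip ⊢
  rw [← ha.apply_eq_of_ne (Nat.zero_le p) hflip (show p < s by omega) (by omega) (by omega), hab,
    show p + 1 + k = s + (p + 1 + k - s) by omega]
  exact hjoin (by omega) _ (by omega) (by omega)

end IsLocoOn

lemma isLocoOn_const (x s m : ℕ) (b : Bool) : IsLocoOn x s m fun _ => b :=
  fun _ _ _ _ _ _ hflip => absurd rfl hflip

lemma noForbidden_iff {m x : ℕ} (c : Fin m → Bool) :
    noForbidden m x c ↔ IsLocoOn x 0 m (bitAt c) := by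
  constructor
  · intro h p _ k hk1 hkx hkm hflip
    have hp1 : bitAt c (p + 1) = !bitAt c p := Bool.eq_not_iff.mpr hflip.symm
    induction k using Nat.strong_induction_on with
    | _ k ih =>
      by_contra hne
      refine h p k hk1 hkx (by omega) ⟨fun k' hk'1 hk'k => ?_, ?_⟩
      · rw [← bitAt_of_lt c, ← bitAt_of_lt c, ← hp1]
        obtain rfl | hk' := hk'1.eq_or_lt
        · rfl
        · rw [show p + k' = p + 1 + (k' - 1) by omega]
          exact ih (k' - 1) (by omega) (by omega) (by omega) (by omega)
      · rw [← bitAt_of_lt c, ← bitAt_of_lt c, show p + k + 1 = p + 1 + k by omega]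
        rw [hp1] at hne
        exact Bool.ne_not.mp hne
  · rintro h j y hy1 hyx hym ⟨hrun, hend⟩
    have hrun' : ∀ k, 1 ≤ k → k ≤ y → bitAt c (j + k) = !bitAt c j := fun k hk1 hky => by
      rw [bitAt_of_lt c (by omega), bitAt_of_lt c (by omega)]; exact hrun k hk1 hky
    have := h j (Nat.zero_le _) y hy1 hyx (by omega) (by simp [hrun' 1 le_rfl hy1])
    rw [show j + 1 + y = j + y + 1 by omega, bitAt_of_lt c hym, hend, ← bitAt_of_lt c,
      hrun' 1 le_rfl hy1] at this
    simp at this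

noncomputable def codes (x m : ℕ) : Finset (Fin m → Bool) :=
  univ.filter fun d => IsLocoOn x 0 m (bitAt d)

noncomputable def completions (x m s : ℕ) (u : ℕ → Bool) : Finset (Fin m → Bool) :=
  (codes x m).filter fun d => ∀ j, s ≤ j → j < m → bitAt d j = u j

noncomputable def numLeadingOne (x n : ℕ) : ℕ := (completions x (n + 1) n fun _ => true).card

section Completions

variable {x m s : ℕ} {u : ℕ → Bool}

lemma mem_codes {d : Fin m → Bool} : d ∈ codes x m ↔ IsLocoOn x 0 m (bitAt d) := by
  simp [codes]

lemma mem_completions {d : Fin m → Bool} :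
    d ∈ completions x m s u ↔
      IsLocoOn x 0 m (bitAt d) ∧ ∀ j, s ≤ j → j < m → bitAt d j = u j := by
  simp [completions, codes]

lemma card_completions_not :
    (completions x m s fun j => !u j).card = (completions x m s u).card := by
  refine card_nbij' (fun d i => !d i) (fun d i => !d i) ?_ ?_ (fun d _ => by simp)
    (fun d _ => by simp)
  all_goals
    intro d hd
    rw [mem_coe, mem_completions] at hd ⊢
    refine ⟨hd.1.not.congr fun n _ hn => (bitAt_not d hn).symm, fun j hsj hjm => ?_⟩
    simp [bitAt_not d hjm, hd.2 j hsj hjm]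

lemma card_completions_eq_card_completions_const (hs : s < m) (hu : IsLocoOn x s m u)
    (hjoin : 0 < s → ∀ k ≤ x, s + k < m → u (s + k) = u s) :
    (completions x m s u).card = (completions x (s + 1) s fun _ => u s).card := by
  have hres : ∀ (d : Fin m → Bool) n, n < s + 1 →
      bitAt (fun j : Fin (s + 1) => d (Fin.castLE hs j)) n = bitAt d n := fun d n hn => by
    rw [bitAt_of_lt _ hn, bitAt_of_lt _ (by omega)]; rfl
  have hglue : ∀ (v : Fin (s + 1) → Bool) n, n < m →
      bitAt (fun j : Fin m => if h : (j : ℕ) < s + 1 then v ⟨j, h⟩ else u j) n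
        = if n ≤ s then bitAt v n else u n := fun v n hn => by
    rw [bitAt_of_lt _ hn]
    by_cases h : n ≤ s
    · simp [h, Nat.lt_succ_of_le h, bitAt_of_lt v (Nat.lt_succ_of_le h)]
    · simp [h, show ¬ n < s + 1 by omega]
  refine card_nbij' (fun d j => d (Fin.castLE hs j))
    (fun v j => if h : (j : ℕ) < s + 1 then v ⟨j, h⟩ else u j) ?_ ?_ ?_ ?_
  · intro d hd
    rw [mem_coe, mem_completions] at hd ⊢
    refine ⟨(hd.1.mono le_rfl hs).congr fun n _ hn => (hres d n hn).symm, fun j hj hjs => ?_⟩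
    rw [hres d j hjs, hd.2 j hj (by omega), show j = s by omega]
  · intro v hv
    rw [mem_coe, mem_completions] at hv ⊢
    have hvs : bitAt v s = u s := hv.2 s le_rfl (by omega)
    refine ⟨(hv.1.glue hu hvs hjoin).congr fun n _ hn => (hglue v n hn).symm,
      fun j hj hjm => ?_⟩
    rw [hglue v j hjm]
    split_ifs with h
    · rw [show j = s by omega, hvs]
    · rfl
  · intro d hd
    rw [mem_coe, mem_completions] at hd
    funext j
    dsimp only
    split_ifs with h
    · rfl
    · rw [← bitAt_of_lt d j.isLt, hd.2 j (by omega) j.isLt]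
  · intro v _
    funext j
    simp [j.isLt]

lemma card_completions_const (n : ℕ) (b : Bool) :
    (completions x (n + 1) n fun _ => b).card = numLeadingOne x n := by
  cases b
  · exact card_completions_not (u := fun _ => true)
  · rfl

lemma card_completions (hs : s < m) (hu : IsLocoOn x s m u)
    (hjoin : 0 < s → ∀ k ≤ x, s + k < m → u (s + k) = u s) :
    (completions x m s u).card = numLeadingOne x s := by
  rw [card_completions_eq_card_completions_const hs hu hjoin, card_completions_const]

lemma completions_eq_of_ne (hsm : s + 1 < m) (hflip : u s ≠ u (s + 1))
    (hconst : ∀ j, s - x ≤ j → j ≤ s → u j = u s) :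
    completions x m s u = completions x m (s - x) u := by
  ext d
  rw [mem_completions, mem_completions]
  refine ⟨fun ⟨hd, hagree⟩ => ⟨hd, fun j hj hjm => ?_⟩,
    fun ⟨hd, hagree⟩ => ⟨hd, fun j hj hjm => hagree j (by omega) hjm⟩⟩
  by_cases hsj : s ≤ j
  · exact hagree j hsj hjm
  rw [hconst j hj (by omega), ← hagree s le_rfl (by omega)]
  refine hd.apply_eq_of_ne_succ ?_ hsm (Nat.zero_le _) (by omega) (by omega)
  rwa [hagree s le_rfl (by omega), hagree (s + 1) (by omega) hsm]

end Completions

def onesUpTo (w : ℕ → Bool) (i : ℕ) : ℕ → Bool := fun j => if j ≤ i then true else w j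

section OnesUpTo

variable {x m i : ℕ} {w : ℕ → Bool}

lemma isLocoOn_onesUpTo (hw : IsLocoOn x (i + 1) m w)
    (hzero : w (i + 1) = false →
      ∀ k, 1 ≤ k → k ≤ x → i + 1 + k < m → w (i + 1 + k) = false) :
    IsLocoOn x 0 m (onesUpTo w i) := by
  intro p _ k hk1 hkx hkm hflip
  simp only [onesUpTo] at hflip ⊢
  rcases lt_trichotomy p i with hpi | rfl | hip
  · simp [show p ≤ i by omega, show p + 1 ≤ i by omega] at hflip
  · simp only [le_refl, if_true, show ¬ p + 1 ≤ p by omega, show ¬ p + 1 + k ≤ p by omega,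
      if_false] at hflip ⊢
    have hp1 : w (p + 1) = false := Bool.eq_false_iff.mpr hflip.symm
    rw [hzero hp1 k hk1 hkx hkm, hp1]
  · simp only [show ¬ p ≤ i by omega, show ¬ p + 1 ≤ i by omega,
      show ¬ p + 1 + k ≤ i by omega, if_false] at hflip ⊢
    exact hw p (by omega) k hk1 hkx hkm hflip

lemma card_completions_onesUpTo_of_runEnd (hw : IsLocoOn x 0 m w) (hi : w i = false)
    (hi1 : w (i + 1) = true) (him : i + 1 < m) :
    (completions x m i (onesUpTo w i)).card = numLeadingOne x i := by
  refine card_completions (by omega) ((isLocoOn_onesUpTo (hw.mono (Nat.zero_le _) le_rfl)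
    fun h => by simp [hi1] at h).mono (Nat.zero_le _) le_rfl) fun _ k hkx hkm => ?_
  simp only [onesUpTo, le_refl, if_true]
  split_ifs with hk
  · rfl
  · rw [hw.apply_eq_of_ne (p := i) (Nat.zero_le _) (by simp [hi, hi1]) (by omega) (by omega) hkm,
      hi1]

lemma card_completions_onesUpTo_of_zeros (hw : IsLocoOn x 0 m w) (him : i + 1 < m)
    (hz : ∀ k, 1 ≤ k → k ≤ x + 1 → i + k < m → w (i + k) = false) :
    (completions x m i (onesUpTo w i)).card = numLeadingOne x (i - x) := by
  have hones : ∀ j, j ≤ i → onesUpTo w i j = true := fun j hj => if_pos hj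
  rw [completions_eq_of_ne him ?_ fun j _ hj => by rw [hones j hj, hones i le_rfl]]
  · refine card_completions (by omega) ((isLocoOn_onesUpTo (hw.mono (Nat.zero_le _) le_rfl)
      fun _ k hk1 hkx hkm => ?_).mono (Nat.zero_le _) le_rfl) fun _ k hkx hkm => ?_
    · rw [add_assoc]; exact hz (1 + k) (by omega) (by omega) (by omega)
    · rw [hones _ (by omega), hones _ (by omega)]
  · simp [onesUpTo, hz 1 le_rfl (by omega) him]

lemma completions_onesUpTo_eq_empty {t : ℕ} (hit : i < t) (hti : t ≤ i + x) (htm : t + 1 < m)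
    (ht : w t = false) (ht1 : w (t + 1) = true) : completions x m i (onesUpTo w i) = ∅ := by
  refine eq_empty_of_forall_notMem fun d hd => ?_
  rw [mem_completions] at hd
  obtain ⟨hd, hagree⟩ := hd
  have hdt : bitAt d t = false := by
    rw [hagree t (by omega) (by omega), onesUpTo, if_neg (by omega), ht]
  have hdt1 : bitAt d (t + 1) = true := by
    rw [hagree (t + 1) (by omega) htm, onesUpTo, if_neg (by omega), ht1]
  have := hd.apply_eq_of_ne_succ (by rw [hdt, hdt1]; simp) htm (Nat.zero_le i) (by omega) hit.le
  rw [hagree i le_rfl (by omega), hdt] at this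
  simp [onesUpTo] at this

end OnesUpTo

lemma numLeadingOne_zero (x : ℕ) : numLeadingOne x 0 = 1 := by
  refine card_eq_one.mpr ⟨fun _ => true, ?_⟩
  ext d
  rw [mem_completions, mem_singleton]
  constructor
  · rintro ⟨-, hd⟩
    funext j
    rw [show j = ⟨0, zero_lt_one⟩ from Fin.ext (by omega), ← bitAt_of_lt d zero_lt_one,
      hd 0 le_rfl zero_lt_one]
  · rintro rfl
    exact ⟨fun _ _ _ _ _ hk => by omega, fun j _ hj => by rw [bitAt_of_lt _ hj]⟩

lemma numLeadingOne_succ (x n : ℕ) :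
    numLeadingOne x (n + 1) = numLeadingOne x n + numLeadingOne x (n - x) := by
  rw [numLeadingOne, ← card_filter_add_card_filter_not fun d => bitAt d n = true]
  congr 1
  · rw [← card_completions (by omega) (isLocoOn_const x n (n + 2) true) fun _ _ _ _ => rfl]
    congr 1
    ext d
    simp only [mem_filter, mem_completions]
    constructor
    · rintro ⟨⟨hd, h1⟩, h0⟩
      refine ⟨hd, fun j hj hjm => ?_⟩
      obtain rfl | rfl : j = n ∨ j = n + 1 := by omega
      exacts [h0, h1 _ le_rfl hjm]
    · rintro ⟨hd, h⟩
      exact ⟨⟨hd, fun j hj hjm => h j (by omega) hjm⟩, h n le_rfl (by omega)⟩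
  -- after complementing, `d_{n+1} = 0` and `d_n = 1`
  · rw [← card_completions_onesUpTo_of_zeros (isLocoOn_const x 0 (n + 2) false) (by omega)
      fun _ _ _ _ => rfl, ← card_completions_not]
    congr 1
    ext d
    simp only [mem_filter, mem_completions]
    constructor
    · rintro ⟨⟨hd, h1⟩, h0⟩
      refine ⟨hd, fun j hj hjm => ?_⟩
      obtain rfl | rfl : j = n ∨ j = n + 1 := by omega
      · simpa [onesUpTo] using h0
      · simp [onesUpTo, h1 _ le_rfl hjm]
    · rintro ⟨hd, h⟩
      refine ⟨⟨hd, fun j hj hjm => ?_⟩, ?_⟩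
      · simpa [onesUpTo, show ¬ j ≤ n by omega] using h j (by omega) hjm
      · simpa [onesUpTo] using h n le_rfl (by omega)

lemma numLeadingOne_eq_sum_Icc (x t : ℕ) :
    numLeadingOne x t = ∑ j ∈ Icc (t - x) t, numLeadingOne x (j - x) := by
  induction t with
  | zero => simp
  | succ t ih =>
    rw [numLeadingOne_succ, ih, sum_Icc_succ_top (by omega)]
    by_cases htx : t < x
    · rw [show t + 1 - x = t - x by omega]
    · rw [← sum_Ioc_add_eq_sum_Icc (show t - x ≤ t by omega), ← Icc_add_one_left_eq_Ioc,
        show t + 1 - x = t - x + 1 by omega, numLeadingOne_succ]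
      ring

lemma completions_self_succ (x n : ℕ) (u : ℕ → Bool) :
    completions x (n + 1) n u = (codes x (n + 1)).filter fun d => bitAt d n = u n :=
  filter_congr fun _ _ =>
    ⟨fun h => h n le_rfl (by omega), fun h j hj hjm => by rwa [show j = n by omega]⟩

lemma card_codes_succ (x n : ℕ) : (codes x (n + 1)).card = 2 * numLeadingOne x n := by
  rw [← card_filter_add_card_filter_not fun d => bitAt d n = true, two_mul]
  congr 1
  · rw [← card_completions_const n true, completions_self_succ]
  · rw [← card_completions_const n false, completions_self_succ]
    simp only [Bool.not_eq_true]

lemma locoN_eq_card_codes (m x : ℕ) : locoN m x = (codes x m).card := by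
  rw [locoN, Nat.card_eq_fintype_card, Fintype.card_subtype]
  congr 1
  ext d
  simp [codes, noForbidden_iff]

lemma Nex_sub_add_one (x i : ℕ) : Nex ((i : ℤ) - x + 1) x = 2 * numLeadingOne x (i - x) := by
  unfold Nex
  split_ifs with h
  · rw [show i - x = 0 by omega, numLeadingOne_zero]; rfl
  · rw [show ((i : ℤ) - x + 1).toNat = i - x + 1 by omega, locoN_eq_card_codes, card_codes_succ]
    push_cast; rfl

def zeros (w : ℕ → Bool) (m : ℕ) : Finset ℕ := (range m).filter fun i => w i = false

section LexOrder

variable {x m : ℕ}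

lemma lexLt_iff_toColex_lt (d c : Fin m → Bool) : lexLt m d c ↔ toColex d < toColex c := by
  change _ ↔ ∃ i, (∀ j, i < j → d j = c j) ∧ d i < c i
  refine exists_congr fun i => ?_
  have : d i < c i ↔ d i = false ∧ c i = true := by cases d i <;> cases c i <;> decide
  simp only [this, Fin.lt_def]
  tauto

lemma locoIdx_eq_card (c : Fin m → Bool) :
    locoIdx m x c = ((codes x m).filter fun d => toColex d < toColex c).card := by
  rw [locoIdx, Nat.card_eq_fintype_card, Fintype.card_subtype, codes, filter_filter]
  simp [noForbidden_iff, lexLt_iff_toColex_lt]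

lemma card_codes_eq {c : Fin m → Bool} (hc : c ∈ codes x m) :
    (codes x m).card = ((codes x m).filter fun d => toColex d < toColex c).card + 1 +
      ((codes x m).filter fun d => toColex c < toColex d).card := by
  rw [← card_filter_add_card_filter_not fun d => toColex d < toColex c, add_assoc]
  congr 1
  have : ((codes x m).filter fun d => ¬ toColex d < toColex c) =
      insert c ((codes x m).filter fun d => toColex c < toColex d) := by
    ext d
    simp only [mem_filter, mem_insert]
    constructor
    · rintro ⟨hd, hnlt⟩
      rcases lt_trichotomy (toColex d) (toColex c) with h | h | h
      exacts [absurd h hnlt, Or.inl (toColex_inj.mp h), Or.inr ⟨hd, h⟩]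
    · rintro (rfl | ⟨hd, hlt⟩)
      exacts [⟨hc, lt_irrefl _⟩, ⟨hd, lt_asymm hlt⟩]
  rw [this, card_insert_of_notMem, add_comm]
  exact fun h => lt_irrefl _ (mem_filter.mp h).2

lemma codes_filter_gt_eq_biUnion (c : Fin m → Bool) :
    ((codes x m).filter fun d => toColex c < toColex d) =
      (zeros (bitAt c) m).biUnion
        fun i => completions x m i (onesUpTo (bitAt c) i) := by
  ext d
  simp only [zeros, mem_filter, mem_biUnion, mem_range, mem_completions, mem_codes,
    ← lexLt_iff_toColex_lt, lexLt]
  constructor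
  · rintro ⟨hd, i, hci, hdi, hagree⟩
    refine ⟨i, ⟨i.isLt, by rw [bitAt_of_lt c i.isLt]; exact hci⟩, hd, fun j hij hjm => ?_⟩
    obtain rfl | hij := hij.eq_or_lt
    · rw [onesUpTo, if_pos le_rfl, bitAt_of_lt d i.isLt, hdi]
    · rw [onesUpTo, if_neg (by omega), bitAt_of_lt _ hjm, bitAt_of_lt _ hjm]
      exact (hagree ⟨j, hjm⟩ hij).symm
  · rintro ⟨i, ⟨him, hci⟩, hd, hagree⟩
    refine ⟨hd, ⟨i, him⟩, by rwa [← bitAt_of_lt c], ?_, fun j hij => ?_⟩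
    · simpa [onesUpTo, bitAt_of_lt d him] using hagree i le_rfl him
    · have hij' : i < (j : ℕ) := hij
      have := hagree j hij'.le j.isLt
      rw [onesUpTo, if_neg (by omega), bitAt_of_lt _ j.isLt, bitAt_of_lt _ j.isLt] at this
      exact this.symm

lemma card_codes_filter_gt (c : Fin m → Bool) :
    ((codes x m).filter fun d => toColex c < toColex d).card =
      ∑ i ∈ zeros (bitAt c) m,
        (completions x m i (onesUpTo (bitAt c) i)).card := by
  rw [codes_filter_gt_eq_biUnion, card_biUnion]
  have key : ∀ i i', i < i' → i' < m → bitAt c i' = false →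
      Disjoint (completions x m i (onesUpTo (bitAt c) i))
        (completions x m i' (onesUpTo (bitAt c) i')) := fun i i' hlt hi'm hi' => by
    refine disjoint_left.mpr fun d hd hd' => ?_
    rw [mem_completions] at hd hd'
    have h1 := hd.2 i' hlt.le hi'm
    rw [hd'.2 i' le_rfl hi'm] at h1
    simp [onesUpTo, show ¬ i' ≤ i by omega, hi'] at h1
  intro i hi i' hi' hne
  rw [mem_coe, zeros, mem_filter, mem_range] at hi hi'
  rcases Nat.lt_or_gt_of_ne hne with h | h
  exacts [key i i' h hi'.1 hi'.2, (key i' i h hi.1 hi.2).symm]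

end LexOrder

def runEnds (w : ℕ → Bool) (m : ℕ) : Finset ℕ :=
  (range (m - 1)).filter fun t => w t = false ∧ w (t + 1) = true

def nearRunEnds (x : ℕ) (w : ℕ → Bool) (m : ℕ) : Finset ℕ :=
  (runEnds w m).biUnion fun t => Icc (t - x) t

section Runs

variable {x m : ℕ} {w : ℕ → Bool}

lemma mem_runEnds {t : ℕ} :
    t ∈ runEnds w m ↔ t + 1 < m ∧ w t = false ∧ w (t + 1) = true := by
  simp only [runEnds, mem_filter, mem_range, Nat.lt_sub_iff_add_lt]

lemma runEnds_subset_nearRunEnds : runEnds w m ⊆ nearRunEnds x w m :=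
  fun t ht => mem_biUnion.mpr ⟨t, ht, mem_Icc.mpr ⟨Nat.sub_le t x, le_rfl⟩⟩

lemma nearRunEnds_subset_zeros (hw : IsLocoOn x 0 m w) : nearRunEnds x w m ⊆ zeros w m := by
  intro j hj
  obtain ⟨t, ht, hj⟩ := mem_biUnion.mp hj
  rw [mem_runEnds] at ht
  rw [mem_Icc] at hj
  rw [zeros, mem_filter, mem_range, ← ht.2.1]
  exact ⟨by omega, hw.apply_eq_of_ne_succ (by simp [ht.2.1, ht.2.2]) ht.1 (Nat.zero_le _)
    (by omega) hj.2⟩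

lemma pairwiseDisjoint_runEnds (hw : IsLocoOn x 0 m w) :
    (runEnds w m : Set ℕ).PairwiseDisjoint fun t => Icc (t - x) t := by
  have key : ∀ t t', t < t' → t ∈ runEnds w m → t' ∈ runEnds w m →
      Disjoint (Icc (t - x) t) (Icc (t' - x) t') := fun t t' hlt ht ht' => by
    rw [mem_runEnds] at ht ht'
    have hfar : t + 1 + x < t' := by
      by_contra! h
      have := hw.apply_eq_of_ne (p := t) (Nat.zero_le _) (by simp [ht.2.1, ht.2.2]) hlt h
        (by omega)
      simp [ht'.2.1, ht.2.2] at this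
    exact disjoint_left.mpr fun j hj hj' => by simp only [mem_Icc] at hj hj'; omega
  intro t ht t' ht' hne
  rcases Nat.lt_or_gt_of_ne hne with h | h
  exacts [key t t' h ht ht', (key t' t h ht' ht).symm]

lemma sum_runEnds (hw : IsLocoOn x 0 m w) :
    ∑ t ∈ runEnds w m, numLeadingOne x t =
      ∑ j ∈ nearRunEnds x w m, numLeadingOne x (j - x) := by
  rw [nearRunEnds, sum_biUnion (pairwiseDisjoint_runEnds hw)]
  exact sum_congr rfl fun t _ => numLeadingOne_eq_sum_Icc x t

lemma zeros_of_notMem_nearRunEnds {i : ℕ} (hi : w i = false) (hin : i ∉ nearRunEnds x w m) :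
    ∀ k ≤ x + 1, i + k < m → w (i + k) = false := by
  intro k
  induction k with
  | zero => simpa using fun _ => hi
  | succ k ih =>
    intro hk hkm
    by_contra h
    have hend : i + k ∈ runEnds w m :=
      mem_runEnds.mpr ⟨by omega, ih (by omega) (by omega), by simpa [add_assoc] using h⟩
    exact hin (mem_biUnion.mpr ⟨i + k, hend, mem_Icc.mpr ⟨by omega, by omega⟩⟩)

lemma card_completions_onesUpTo (hw : IsLocoOn x 0 m w) (htop : w (m - 1) = true) {i : ℕ}
    (hi : i ∈ zeros w m) :
    (completions x m i (onesUpTo w i)).card =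
      (if i ∈ runEnds w m then numLeadingOne x i else 0) +
        if i ∉ nearRunEnds x w m then numLeadingOne x (i - x) else 0 := by
  rw [zeros, mem_filter, mem_range] at hi
  have him : i + 1 < m := by
    by_contra h
    rw [show i = m - 1 by omega, htop] at hi
    simp at hi
  by_cases hend : i ∈ runEnds w m
  · rw [if_pos hend, if_neg (not_not.mpr (runEnds_subset_nearRunEnds hend)), add_zero]
    exact card_completions_onesUpTo_of_runEnd hw hi.2 (mem_runEnds.mp hend).2.2 him
  rw [if_neg hend, zero_add]
  split_ifs with hnear
  · obtain ⟨t, ht, hit⟩ := mem_biUnion.mp hnear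
    rw [mem_Icc] at hit
    have hit' : i ≠ t := fun h => hend (h ▸ ht)
    rw [mem_runEnds] at ht
    rw [completions_onesUpTo_eq_empty (by omega) (by omega) ht.1 ht.2.1 ht.2.2, card_empty]
  · exact card_completions_onesUpTo_of_zeros hw him fun k _ hkx hkm =>
      zeros_of_notMem_nearRunEnds hi.2 hnear k hkx hkm

lemma sum_card_completions_onesUpTo (hw : IsLocoOn x 0 m w) (htop : w (m - 1) = true) :
    ∑ i ∈ zeros w m, (completions x m i (onesUpTo w i)).card =
      ∑ i ∈ zeros w m, numLeadingOne x (i - x) := by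
  have hsub := nearRunEnds_subset_zeros hw
  rw [sum_congr rfl fun i hi => card_completions_onesUpTo hw htop hi, sum_add_distrib,
    sum_ite_mem, inter_eq_right.mpr (runEnds_subset_nearRunEnds.trans hsub), sum_runEnds hw,
    ← sum_filter, filter_notMem_eq_sdiff, add_comm, sum_sdiff hsub]

end Runs

end Loco

open Loco

/-- For all `m ≥ 2`, `x ≥ 1` and every codeword `c ∈ C(m, x)` with leftmost
bit `c_{m-1} = 1`, the balanced index `g^b(c) = N(m, x) - 1 - g(c)` satisfies
`2 g^b(c) = Σ_{i=0}^{m-2} N(i - x + 1, x) · [c_i = 0]`, where any term `N(k, x)` with `k ≤ 1`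
is interpreted, by convention, as `2`. -/
theorem loco_balanced_index_formula (m x : ℕ) (hm : 2 ≤ m)
    (c : Fin m → Bool) (hc : noForbidden m x c)
    (h0 : c ⟨m - 1, by omega⟩ = true) :
    2 * ((locoN m x : ℤ) - 1 - (locoIdx m x c : ℤ))
      = ∑ i : Fin (m - 1),
          if c (Fin.castLE (by omega) i) = false then
            Nex (((i : ℕ) : ℤ) - (x : ℤ) + 1) x
          else 0 := by
  have hcw : IsLocoOn x 0 m (bitAt c) := (noForbidden_iff c).mp hc
  have htop : bitAt c (m - 1) = true := by rw [bitAt_of_lt c (by omega)]; exact h0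
  have hcount : (locoN m x : ℤ) - 1 - locoIdx m x c =
      ∑ i ∈ zeros (bitAt c) m, (numLeadingOne x (i - x) : ℤ) := by
    rw [locoN_eq_card_codes, card_codes_eq (mem_codes.mpr hcw), ← locoIdx_eq_card,
      card_codes_filter_gt, sum_card_completions_onesUpTo hcw htop]
    push_cast
    ring
  have hterms : ∀ i : Fin (m - 1), (if c (Fin.castLE (by omega) i) = false then
      Nex (((i : ℕ) : ℤ) - (x : ℤ) + 1) x else 0) =
        if bitAt c i = false then 2 * (numLeadingOne x (i - x) : ℤ) else 0 := fun i => by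
    rw [bitAt_of_lt c (by omega), Nex_sub_add_one]
    rfl
  rw [sum_congr rfl fun i _ => hterms i, Fin.sum_univ_eq_sum_range
      (fun i => if bitAt c i = false then 2 * (numLeadingOne x (i - x) : ℤ) else 0),
    hcount, mul_sum, zeros, sum_filter, show range m = range (m - 1 + 1) by congr; omega,
    sum_range_succ, htop, if_neg (by decide), add_zero]
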